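/- Consider Proximal AL iterates (x_k), (λ_k), (r̃_k) with parameters ρ, β > 0 satisfying all hypotheses of the boundedness lemma (compact sublevel sets with constant ρ₀; f ≤ Ū on {‖c(x)‖ ≤ 1}; smoothness/nondegeneracy on S⁰_α̂ with α̂ = 7Ū + 7C₀ − 6L̄ + 13‖λ₀‖² + 2; ‖c(x₀)‖² ≤ min{C₀/ρ, 1}), and in addition let ε ∈ (0,1], η ∈ [0,2], Σ_{k≥1}‖r̃_k‖² ≤ R with R ∈ [1,∞) and ‖r̃_k‖ ≤ ε/2 for all k ≥ 1, β = ε^η/2, and ρ ≥ max{16·max{C₁,C₂}/ε^η, (M_f + βD_S + 1)²/(2σ²) + ρ₀, 16(M_c² + σ²)R/σ⁴, 3ρ₀, 1}, where C₁ = (4/σ²)(L_f + L_cM_f/σ + β)², C₂ = (4/σ²)(β + 2M_cβ/σ)², and D_S is the diameter of S⁰_α̂. Then there exists a subsequence of (x_k, λ_k)_{k ≥ 1} converging to a point (x*, λ*) satisfying the first-order KKT conditions: ∇f(x*) + ∇c(x*)λ* = 0 and c(x*) = 0. -/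

import Mathlib

open Filter Topology

/-!
Substituting the multiplier update into the stationarity condition gives
`∇c(x_{k+1}) λ_{k+1} = r̃_{k+1} - ∇f(x_{k+1}) - β (x_{k+1} - x_k)`. On `S` the lower bound `σ`
on `∇c` therefore bounds `λ_{k+1}`, and subtracting two consecutive such identities bounds
`‖λ_{k+2} - λ_{k+1}‖ = ρ ‖c(x_{k+2})‖` linearly by the last two steps and residuals. The
multiplier step raises the augmented Lagrangian by exactly `ρ ‖c‖² = ‖Δλ‖² / ρ`, so for `ρ`
this large `W_k = L_ρ(x_{k+1}, λ_{k+1}) + (β/8) ‖x_{k+1} - x_k‖²` decreases by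
`(β/4) ‖x_{k+2} - x_{k+1}‖²` up to residual errors of total at most `1`. An induction keeps all
iterates in the compact sublevel set `S`, where `W` is bounded below; hence the steps are
square-summable, `c(x_k) → 0`, the stationarity residual tends to `0`, and every limit point
of the bounded sequence `(x_k, λ_k)` is a KKT point.
-/

noncomputable def AL {n m : ℕ} (f : EuclideanSpace ℝ (Fin n) → ℝ)
    (c : EuclideanSpace ℝ (Fin n) → EuclideanSpace ℝ (Fin m)) (ρ : ℝ)
    (x : EuclideanSpace ℝ (Fin n)) (lam : EuclideanSpace ℝ (Fin m)) : ℝ :=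
  f x + (inner ℝ lam (c x) : ℝ) + ρ / 2 * ‖c x‖ ^ 2

noncomputable def gradc {n m : ℕ}
    (c : EuclideanSpace ℝ (Fin n) → EuclideanSpace ℝ (Fin m))
    (x : EuclideanSpace ℝ (Fin n)) :
    EuclideanSpace ℝ (Fin m) →L[ℝ] EuclideanSpace ℝ (Fin n) :=
  ContinuousLinearMap.adjoint (fderiv ℝ c x)

noncomputable def hess {n : ℕ} (g : EuclideanSpace ℝ (Fin n) → ℝ)
    (x d : EuclideanSpace ℝ (Fin n)) : ℝ :=
  iteratedFDeriv ℝ 2 g x ![d, d]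

open Finset

theorem mul_le_sq_div_add (a b : ℝ) {s : ℝ} (hs : 0 < s) :
    a * b ≤ a ^ 2 / (2 * s) + s / 2 * b ^ 2 := by
  have key : a ^ 2 / (2 * s) + s / 2 * b ^ 2 - a * b = (a - s * b) ^ 2 / (2 * s) := by
    field_simp; ring
  have : 0 ≤ (a - s * b) ^ 2 / (2 * s) := by positivity
  linarith

theorem sq_add_add_add_mul_le (a b u v : ℝ) {t : ℝ} (ht : 0 ≤ t) :
    (a + b + u + t * v) ^ 2 ≤ 4 * a ^ 2 + 4 * b ^ 2 + 2 * (1 + t) * (u ^ 2 + t * v ^ 2) := by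
  nlinarith [sq_nonneg (a - b), sq_nonneg (a + b - u - t * v), mul_nonneg ht (sq_nonneg (u - v))]

theorem sum_range_le_of_le_add {a d e : ℕ → ℝ} (h : ∀ k, a (k + 1) + d k ≤ a k + e k) (N : ℕ) :
    ∑ k ∈ range N, d k ≤ a 0 - a N + ∑ k ∈ range N, e k := by
  induction N with
  | zero => simp
  | succ N ih =>
    rw [sum_range_succ, sum_range_succ]
    linarith [h N]

-- The descent step is only available while the iterates stay in the region `P`; the invariant
-- `W k ≤ W 0 + ∑ e` and membership in `P` are carried along together.
theorem forall_of_le_add {P : ℕ → Prop} {W e : ℕ → ℝ} {B : ℝ} (h0 : P 0) (h1 : P 1)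
    (hstep : ∀ k, P (k + 1) → P (k + 2) → W (k + 1) ≤ W k + e k)
    (hsum : ∀ N, W 0 + ∑ k ∈ range N, e k ≤ B)
    (hnext : ∀ k, P k → P (k + 1) → W k ≤ B → P (k + 2)) (k : ℕ) : P k := by
  suffices ∀ k, P k ∧ P (k + 1) ∧ W k ≤ W 0 + ∑ j ∈ range k, e j from (this k).1
  intro k
  induction k with
  | zero => simp [h0, h1]
  | succ k ih =>
    obtain ⟨hk, hk1, hW⟩ := ih
    have hk2 := hnext k hk hk1 (hW.trans (hsum k))
    refine ⟨hk1, hk2, ?_⟩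
    rw [sum_range_succ]
    linarith [hstep k hk1 hk2]

theorem tendsto_zero_of_sum_norm_sq_le {E : Type*} [SeminormedAddCommGroup E] {u : ℕ → E} {C : ℝ}
    (h : ∀ N, ∑ k ∈ range N, ‖u k‖ ^ 2 ≤ C) : Tendsto u atTop (𝓝 0) := by
  have hsq : Tendsto (fun k => ‖u k‖ ^ 2) atTop (𝓝 0) :=
    (summable_of_sum_range_le (fun _ => sq_nonneg _) h).tendsto_atTop_zero
  rw [tendsto_zero_iff_norm_tendsto_zero]
  simpa [Real.sqrt_sq (norm_nonneg _)] using hsq.sqrt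

theorem tendsto_sub_of_le_add {E : Type*} [SeminormedAddCommGroup E] {x : ℕ → E} {W e : ℕ → ℝ}
    {β L C : ℝ} (hβ : 0 < β) (hstep : ∀ k, W (k + 1) + β * ‖x (k + 2) - x (k + 1)‖ ^ 2 ≤ W k + e k)
    (hW : ∀ k, L ≤ W k) (he : ∀ N, ∑ k ∈ range N, e k ≤ C) :
    Tendsto (fun k => x (k + 1) - x k) atTop (𝓝 0) := by
  refine (tendsto_add_atTop_iff_nat 1).mp (tendsto_zero_of_sum_norm_sq_le (C := (W 0 - L + C) / β)
    fun N => ?_)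
  rw [le_div_iff₀' hβ, mul_sum]
  linarith [sum_range_le_of_le_add hstep N, hW N, he N]

theorem ContinuousLinearMap.mul_norm_apply_le {E F : Type*} [SeminormedAddCommGroup E]
    [SeminormedAddCommGroup F] [NormedSpace ℝ E] [NormedSpace ℝ F] (D : E →L[ℝ] F) (v : E)
    {σ a b p q : ℝ} (hσ : 0 ≤ σ) (ha : ‖D‖ ≤ a) (hb : ‖D‖ ≤ b) (hp : 0 ≤ p) (hq : 0 ≤ q)
    (hv : σ * ‖v‖ ≤ p + q) : σ * ‖D v‖ ≤ a * p + b * q :=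
  calc σ * ‖D v‖ ≤ ‖D‖ * (σ * ‖v‖) := by
        rw [mul_left_comm]; exact mul_le_mul_of_nonneg_left (D.le_opNorm v) hσ
    _ ≤ ‖D‖ * p + ‖D‖ * q := by rw [← mul_add]; exact mul_le_mul_of_nonneg_left hv (norm_nonneg D)
    _ ≤ a * p + b * q := by gcongr

theorem bddBelow_range_of_isCompact_sublevel {X : Type*} [TopologicalSpace X] {g : X → ℝ}
    (hg : Continuous g) (hK : ∀ α, {z | g z ≤ α} = ∅ ∨ IsCompact {z | g z ≤ α}) :
    BddBelow (Set.range g) := by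
  rcases isEmpty_or_nonempty X with hX | ⟨⟨y⟩⟩
  · simp [Set.range_eq_empty]
  have hy : {z | g z ≤ g y}.Nonempty := ⟨y, Set.mem_ofPred.mpr le_rfl⟩
  obtain ⟨b, hb⟩ := ((hK (g y)).resolve_left hy.ne_empty).bddBelow_image hg.continuousOn
  refine ⟨min b (g y), ?_⟩
  rintro _ ⟨z, rfl⟩
  by_cases hz : g z ≤ g y
  · exact (min_le_left _ _).trans (hb ⟨z, hz, rfl⟩)
  · exact (min_le_right _ _).trans (not_le.mp hz).le

theorem ContDiff.continuous_gradient {F : Type*} [NormedAddCommGroup F] [InnerProductSpace ℝ F]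
    [CompleteSpace F] {g : F → ℝ} (hg : ContDiff ℝ 1 g) : Continuous (gradient g) :=
  (InnerProductSpace.toDual ℝ F).symm.continuous.comp (hg.continuous_fderiv one_ne_zero)

section ProxAL

variable {n m : ℕ} {f : EuclideanSpace ℝ (Fin n) → ℝ}
  {c : EuclideanSpace ℝ (Fin n) → EuclideanSpace ℝ (Fin m)} {ρ β : ℝ}
  {x : ℕ → EuclideanSpace ℝ (Fin n)} {lam : ℕ → EuclideanSpace ℝ (Fin m)}
  {r : ℕ → EuclideanSpace ℝ (Fin n)}
  {S : Set (EuclideanSpace ℝ (Fin n))} {Mf Lf Mc σ Lc : ℝ}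

theorem AL_add_smul (y : EuclideanSpace ℝ (Fin n)) (μ : EuclideanSpace ℝ (Fin m)) :
    AL f c ρ y (μ + ρ • c y) = AL f c ρ y μ + ρ * ‖c y‖ ^ 2 := by
  simp only [AL, inner_add_left, real_inner_smul_left, real_inner_self_eq_norm_sq]
  ring

theorem penalty_le_AL_add {ρ' : ℝ} (hρ' : ρ' < ρ) (y : EuclideanSpace ℝ (Fin n))
    (μ : EuclideanSpace ℝ (Fin m)) :
    f y + ρ' / 2 * ‖c y‖ ^ 2 ≤ AL f c ρ y μ + ‖μ‖ ^ 2 / (2 * (ρ - ρ')) := by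
  have hinner : -(‖μ‖ * ‖c y‖) ≤ inner ℝ μ (c y) := by
    linarith [abs_le.mp (abs_real_inner_le_norm μ (c y))]
  have := mul_le_sq_div_add ‖μ‖ ‖c y‖ (sub_pos.mpr hρ')
  simp only [AL]
  linarith

theorem penalty_le_AL_add_one {ρ₀ Λ : ℝ} (hρ₀ : ρ₀ < ρ) (hσ : 0 < σ)
    (hΛ : Λ ^ 2 / (2 * σ ^ 2) + ρ₀ ≤ ρ) (y : EuclideanSpace ℝ (Fin n))
    {μ : EuclideanSpace ℝ (Fin m)} (hμ : σ * ‖μ‖ ≤ Λ) :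
    f y + ρ₀ / 2 * ‖c y‖ ^ 2 ≤ AL f c ρ y μ + 1 := by
  have hμ' : ‖μ‖ ^ 2 / (2 * (ρ - ρ₀)) ≤ 1 := by
    rw [div_le_one (by linarith)]
    have hΛ' : Λ ^ 2 ≤ (ρ - ρ₀) * (2 * σ ^ 2) := (div_le_iff₀ (by positivity)).mp (by linarith)
    refine le_of_mul_le_mul_left ?_ (by positivity : 0 < σ ^ 2)
    nlinarith [pow_le_pow_left₀ (by positivity) hμ 2]
  linarith [penalty_le_AL_add (f := f) (c := c) hρ₀ y μ]

theorem AL_le_of_norm_sq_le {C : ℝ} (hρ : 1 ≤ ρ) (y : EuclideanSpace ℝ (Fin n))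
    (μ : EuclideanSpace ℝ (Fin m)) (hC : ‖c y‖ ^ 2 ≤ C / ρ) :
    AL f c ρ y μ ≤ f y + ‖μ‖ ^ 2 / 2 + C := by
  have hinner := real_inner_le_norm μ (c y)
  have := mul_le_sq_div_add ‖μ‖ ‖c y‖ one_pos
  have hρc : ρ * ‖c y‖ ^ 2 ≤ C := by rwa [le_div_iff₀' (by linarith)] at hC
  have : ‖c y‖ ^ 2 ≤ ρ * ‖c y‖ ^ 2 := le_mul_of_one_le_left (sq_nonneg _) hρ
  simp only [AL]
  linarith

theorem norm_gradc (y : EuclideanSpace ℝ (Fin n)) : ‖gradc c y‖ = ‖fderiv ℝ c y‖ :=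
  ContinuousLinearMap.adjoint.norm_map _

theorem norm_gradc_sub_gradc (y z : EuclideanSpace ℝ (Fin n)) :
    ‖gradc c y - gradc c z‖ = ‖fderiv ℝ c y - fderiv ℝ c z‖ := by
  rw [gradc, gradc, ← map_sub, LinearIsometryEquiv.norm_map]

theorem ContDiff.continuous_gradc_apply (hc : ContDiff ℝ 1 c) :
    Continuous fun p : EuclideanSpace ℝ (Fin n) × EuclideanSpace ℝ (Fin m) => gradc c p.1 p.2 :=
  ((ContinuousLinearMap.adjoint.continuous.comp (hc.continuous_fderiv one_ne_zero)).comp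
    continuous_fst).clm_apply continuous_snd

structure IsProxALIterates (f : EuclideanSpace ℝ (Fin n) → ℝ)
    (c : EuclideanSpace ℝ (Fin n) → EuclideanSpace ℝ (Fin m)) (ρ β : ℝ)
    (x : ℕ → EuclideanSpace ℝ (Fin n)) (lam : ℕ → EuclideanSpace ℝ (Fin m))
    (r : ℕ → EuclideanSpace ℝ (Fin n)) : Prop where
  stationary : ∀ k, gradient f (x (k + 1)) + gradc c (x (k + 1)) (lam k)
    + ρ • gradc c (x (k + 1)) (c (x (k + 1))) + β • (x (k + 1) - x k) = r (k + 1)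
  decrease : ∀ k, AL f c ρ (x (k + 1)) (lam k) + β / 2 * ‖x (k + 1) - x k‖ ^ 2
    ≤ AL f c ρ (x k) (lam k)
  multiplier_succ : ∀ k, lam (k + 1) = lam k + ρ • c (x (k + 1))

structure RegularOn (f : EuclideanSpace ℝ (Fin n) → ℝ)
    (c : EuclideanSpace ℝ (Fin n) → EuclideanSpace ℝ (Fin m))
    (S : Set (EuclideanSpace ℝ (Fin n))) (Mf Lf Mc σ Lc : ℝ) : Prop where
  norm_gradient_le : ∀ y ∈ S, ‖gradient f y‖ ≤ Mf
  gradient_lipschitz : ∀ y ∈ S, ∀ z ∈ S, ‖gradient f y - gradient f z‖ ≤ Lf * ‖y - z‖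
  norm_fderiv_le : ∀ y ∈ S, ‖fderiv ℝ c y‖ ≤ Mc
  mul_norm_le_norm_gradc : ∀ y ∈ S, ∀ v, σ * ‖v‖ ≤ ‖gradc c y v‖
  fderiv_lipschitz : ∀ y ∈ S, ∀ z ∈ S, ‖fderiv ℝ c y - fderiv ℝ c z‖ ≤ Lc * ‖y - z‖

noncomputable def proxALLyapunov (f : EuclideanSpace ℝ (Fin n) → ℝ)
    (c : EuclideanSpace ℝ (Fin n) → EuclideanSpace ℝ (Fin m)) (ρ β : ℝ)
    (x : ℕ → EuclideanSpace ℝ (Fin n)) (lam : ℕ → EuclideanSpace ℝ (Fin m)) (k : ℕ) : ℝ :=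
  AL f c ρ (x (k + 1)) (lam (k + 1)) + β / 8 * ‖x (k + 1) - x k‖ ^ 2

noncomputable def proxALError {E : Type*} [SeminormedAddCommGroup E] (ρ σ t : ℝ) (r : ℕ → E)
    (k : ℕ) : ℝ :=
  2 * (1 + t) / (ρ * σ ^ 2) * (‖r (k + 2)‖ ^ 2 + t * ‖r (k + 1)‖ ^ 2)

theorem sum_range_proxALError_le_one {E : Type*} [SeminormedAddCommGroup E] {r : ℕ → E}
    {R ρ σ Mc t : ℝ} (hR : ∀ N, ∑ k ∈ range N, ‖r (k + 1)‖ ^ 2 ≤ R) (hρ : 0 < ρ) (hσ : 0 < σ)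
    (ht0 : 0 ≤ t) (ht : t ≤ 1 + 2 * Mc / σ) (hρR : 16 * (Mc ^ 2 + σ ^ 2) * R / σ ^ 4 ≤ ρ)
    (N : ℕ) :
    ∑ k ∈ range N, proxALError ρ σ t r k ≤ 1 := by
  have hR0 : 0 ≤ R := by simpa using hR 0
  have hshift : ∑ k ∈ range N, ‖r (k + 2)‖ ^ 2 ≤ R := by
    have := hR (N + 1)
    rw [sum_range_succ'] at this
    linarith [sq_nonneg ‖r (0 + 1)‖]
  have hσt : (1 + t) * σ ≤ 2 * (σ + Mc) := by
    have := mul_le_mul_of_nonneg_right ht hσ.le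
    rw [add_mul, div_mul_cancel₀ _ hσ.ne'] at this
    linarith
  have hsq : 2 * (1 + t) ^ 2 * R ≤ ρ * σ ^ 2 := by
    rw [div_le_iff₀ (by positivity)] at hρR
    have : ((1 + t) * σ) ^ 2 ≤ (2 * (σ + Mc)) ^ 2 := pow_le_pow_left₀ (by positivity) hσt 2
    nlinarith [sq_nonneg (σ - Mc), mul_le_mul_of_nonneg_right this hR0, sq_pos_of_pos hσ]
  simp only [proxALError]
  rw [← mul_sum, sum_add_distrib, ← mul_sum, div_mul_eq_mul_div, div_le_one (by positivity)]
  calc 2 * (1 + t) * (∑ k ∈ range N, ‖r (k + 2)‖ ^ 2 + t * ∑ k ∈ range N, ‖r (k + 1)‖ ^ 2)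
      ≤ 2 * (1 + t) * (R + t * R) := by gcongr; exact hR N
    _ = 2 * (1 + t) ^ 2 * R := by ring
    _ ≤ ρ * σ ^ 2 := hsq

theorem sub_one_le_proxALLyapunov {σ ρ₀ Λ L : ℝ} (hρ₀ : ρ₀ < ρ) (hσ : 0 < σ)
    (hΛ : Λ ^ 2 / (2 * σ ^ 2) + ρ₀ ≤ ρ) (hβ : 0 ≤ β)
    (hL : ∀ y, L ≤ f y + ρ₀ / 2 * ‖c y‖ ^ 2) {k : ℕ} (hlam : σ * ‖lam (k + 1)‖ ≤ Λ) :
    L - 1 ≤ proxALLyapunov f c ρ β x lam k := by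
  have := penalty_le_AL_add_one (f := f) (c := c) hρ₀ hσ hΛ (x (k + 1)) hlam
  have : 0 ≤ β / 8 * ‖x (k + 1) - x k‖ ^ 2 := by positivity
  simp only [proxALLyapunov]
  linarith [hL (x (k + 1))]

namespace IsProxALIterates

theorem gradc_lam_succ (hx : IsProxALIterates f c ρ β x lam r) (k : ℕ) :
    gradc c (x (k + 1)) (lam (k + 1))
      = r (k + 1) - gradient f (x (k + 1)) - β • (x (k + 1) - x k) := by
  rw [hx.multiplier_succ k, map_add, map_smul, ← hx.stationary k]
  abel

theorem AL_succ_add_le (hx : IsProxALIterates f c ρ β x lam r) (k : ℕ) :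
    AL f c ρ (x (k + 1)) (lam (k + 1)) + β / 2 * ‖x (k + 1) - x k‖ ^ 2
      ≤ AL f c ρ (x k) (lam k) + ρ * ‖c (x (k + 1))‖ ^ 2 := by
  rw [hx.multiplier_succ k, AL_add_smul]
  linarith [hx.decrease k]

theorem norm_lam_succ_sub (hx : IsProxALIterates f c ρ β x lam r) (hρ : 0 ≤ ρ) (k : ℕ) :
    ‖lam (k + 1) - lam k‖ = ρ * ‖c (x (k + 1))‖ := by
  rw [hx.multiplier_succ k, add_sub_cancel_left, norm_smul_of_nonneg hρ]

theorem mul_norm_lam_succ_le (hx : IsProxALIterates f c ρ β x lam r) (hβ : 0 ≤ β)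
    {σ Mf : ℝ} {k : ℕ} (hσ : ∀ v, σ * ‖v‖ ≤ ‖gradc c (x (k + 1)) v‖)
    (hMf : ‖gradient f (x (k + 1))‖ ≤ Mf) :
    σ * ‖lam (k + 1)‖ ≤ Mf + β * ‖x (k + 1) - x k‖ + ‖r (k + 1)‖ := by
  have h := hσ (lam (k + 1))
  rw [hx.gradc_lam_succ k] at h
  have h₁ := norm_sub_le (r (k + 1) - gradient f (x (k + 1))) (β • (x (k + 1) - x k))
  have h₂ := norm_sub_le (r (k + 1)) (gradient f (x (k + 1)))
  rw [norm_smul_of_nonneg hβ] at h₁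
  linarith

theorem mul_norm_lam_succ_le_of_mem (hx : IsProxALIterates f c ρ β x lam r)
    (hreg : RegularOn f c S Mf Lf Mc σ Lc) (hS : Bornology.IsBounded S) (hβ : 0 ≤ β) {k : ℕ}
    (hr : ‖r (k + 1)‖ ≤ 1) (hk : x k ∈ S) (hk1 : x (k + 1) ∈ S) :
    σ * ‖lam (k + 1)‖ ≤ Mf + β * Metric.diam S + 1 := by
  have hdiam : ‖x (k + 1) - x k‖ ≤ Metric.diam S :=
    dist_eq_norm (x (k + 1)) (x k) ▸ Metric.dist_le_diam_of_mem hS hk1 hk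
  linarith [hx.mul_norm_lam_succ_le hβ (hreg.mul_norm_le_norm_gradc _ hk1)
    (hreg.norm_gradient_le _ hk1), mul_le_mul_of_nonneg_left hdiam hβ]

theorem mul_norm_lam_sub_le (hx : IsProxALIterates f c ρ β x lam r)
    (hreg : RegularOn f c S Mf Lf Mc σ Lc)
    (hβ : 0 ≤ β) (hσ : 0 < σ) {k : ℕ} (h1 : x (k + 1) ∈ S) (h2 : x (k + 2) ∈ S) :
    σ * ‖lam (k + 2) - lam (k + 1)‖
      ≤ (Lf + Lc * Mf / σ + β) * ‖x (k + 2) - x (k + 1)‖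
        + (β + 2 * Mc * β / σ) * ‖x (k + 1) - x k‖ + ‖r (k + 2)‖
        + (1 + 2 * Mc / σ) * ‖r (k + 1)‖ := by
  set D := gradc c (x (k + 2)) - gradc c (x (k + 1))
  have hsplit : gradc c (x (k + 2)) (lam (k + 2) - lam (k + 1))
      = (r (k + 2) - r (k + 1)) - (gradient f (x (k + 2)) - gradient f (x (k + 1)))
        - (β • (x (k + 2) - x (k + 1)) - β • (x (k + 1) - x k)) - D (lam (k + 1)) := by
    rw [map_sub, hx.gradc_lam_succ (k + 1), sub_apply, hx.gradc_lam_succ k]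
    abel
  -- `‖D‖ ≤ Lc ‖Δx‖` is spent on the `Mf` part of the multiplier bound and `‖D‖ ≤ 2 Mc` on the
  -- rest; this produces the constants `C1` and `C2`.
  have hD : σ * ‖D (lam (k + 1))‖
      ≤ (Lc * ‖x (k + 2) - x (k + 1)‖) * Mf + (2 * Mc) * (β * ‖x (k + 1) - x k‖ + ‖r (k + 1)‖) := by
    refine D.mul_norm_apply_le _ hσ.le ?_ ?_ ((norm_nonneg _).trans (hreg.norm_gradient_le _ h1))
      (by positivity) ?_
    · rw [norm_gradc_sub_gradc]
      exact hreg.fderiv_lipschitz _ h2 _ h1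
    · have := norm_sub_le (gradc c (x (k + 2))) (gradc c (x (k + 1)))
      rw [norm_gradc, norm_gradc] at this
      linarith [hreg.norm_fderiv_le _ h1, hreg.norm_fderiv_le _ h2]
    · linarith [hx.mul_norm_lam_succ_le hβ (hreg.mul_norm_le_norm_gradc _ h1)
        (hreg.norm_gradient_le _ h1)]
  have hD' : ‖D (lam (k + 1))‖ ≤ Lc * Mf / σ * ‖x (k + 2) - x (k + 1)‖
      + 2 * Mc * β / σ * ‖x (k + 1) - x k‖ + 2 * Mc / σ * ‖r (k + 1)‖ := by
    rw [← mul_le_mul_iff_of_pos_left hσ]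
    refine hD.trans (le_of_eq ?_)
    field_simp
    ring
  have hnorm := hreg.mul_norm_le_norm_gradc _ h2 (lam (k + 2) - lam (k + 1))
  rw [hsplit] at hnorm
  have h₁ := norm_sub_le (r (k + 2) - r (k + 1) - (gradient f (x (k + 2)) - gradient f (x (k + 1)))
    - (β • (x (k + 2) - x (k + 1)) - β • (x (k + 1) - x k))) (D (lam (k + 1)))
  have h₂ := norm_sub_le (r (k + 2) - r (k + 1) - (gradient f (x (k + 2)) - gradient f (x (k + 1))))
    (β • (x (k + 2) - x (k + 1)) - β • (x (k + 1) - x k))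
  have h₃ := norm_sub_le (r (k + 2) - r (k + 1)) (gradient f (x (k + 2)) - gradient f (x (k + 1)))
  have h₄ := norm_sub_le (r (k + 2)) (r (k + 1))
  have h₅ := norm_sub_le (β • (x (k + 2) - x (k + 1))) (β • (x (k + 1) - x k))
  rw [norm_smul_of_nonneg hβ, norm_smul_of_nonneg hβ] at h₅
  linarith [hreg.gradient_lipschitz _ h2 _ h1]

theorem lyapunov_succ_add_le (hx : IsProxALIterates f c ρ β x lam r)
    (hreg : RegularOn f c S Mf Lf Mc σ Lc) (hρ : 0 < ρ) (hβ : 0 ≤ β) (hσ : 0 < σ)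
    (hA : 4 / σ ^ 2 * (Lf + Lc * Mf / σ + β) ^ 2 ≤ β * ρ / 8)
    (hB : 4 / σ ^ 2 * (β + 2 * Mc * β / σ) ^ 2 ≤ β * ρ / 8)
    {t : ℝ} (ht : 1 + 2 * Mc / σ ≤ t) {k : ℕ} (h1 : x (k + 1) ∈ S) (h2 : x (k + 2) ∈ S) :
    proxALLyapunov f c ρ β x lam (k + 1) + β / 4 * ‖x (k + 2) - x (k + 1)‖ ^ 2
      ≤ proxALLyapunov f c ρ β x lam k + proxALError ρ σ t r k := by
  set A := Lf + Lc * Mf / σ + β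
  set B := β + 2 * Mc * β / σ
  set a := ‖x (k + 2) - x (k + 1)‖
  set b := ‖x (k + 1) - x k‖
  set E := 2 * (1 + t) * (‖r (k + 2)‖ ^ 2 + t * ‖r (k + 1)‖ ^ 2)
  have hMc : 0 ≤ Mc := (norm_nonneg _).trans (hreg.norm_fderiv_le _ h1)
  have ht0 : 0 ≤ t := by
    have : 0 ≤ 2 * Mc / σ := by positivity
    linarith
  have hlin : σ * (ρ * ‖c (x (k + 2))‖) ≤ A * a + B * b + ‖r (k + 2)‖ + t * ‖r (k + 1)‖ := by
    rw [← hx.norm_lam_succ_sub hρ.le (k + 1)]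
    linarith [hx.mul_norm_lam_sub_le hreg hβ hσ h1 h2,
      mul_le_mul_of_nonneg_right ht (norm_nonneg (r (k + 1)))]
  have hsq : (σ * (ρ * ‖c (x (k + 2))‖)) ^ 2 ≤ 4 * (A * a) ^ 2 + 4 * (B * b) ^ 2 + E :=
    (pow_le_pow_left₀ (by positivity) hlin 2).trans (sq_add_add_add_mul_le _ _ _ _ ht0)
  have hAa : 4 * (A * a) ^ 2 ≤ σ ^ 2 * (β * ρ / 8) * a ^ 2 := by
    have e : 4 * (A * a) ^ 2 = σ ^ 2 * (4 / σ ^ 2 * A ^ 2) * a ^ 2 := by field_simp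
    rw [e]; gcongr
  have hBb : 4 * (B * b) ^ 2 ≤ σ ^ 2 * (β * ρ / 8) * b ^ 2 := by
    have e : 4 * (B * b) ^ 2 = σ ^ 2 * (4 / σ ^ 2 * B ^ 2) * b ^ 2 := by field_simp
    rw [e]; gcongr
  have hc : ρ * ‖c (x (k + 2))‖ ^ 2 ≤ β / 8 * (a ^ 2 + b ^ 2) + E / (ρ * σ ^ 2) := by
    rw [← mul_le_mul_iff_of_pos_left (by positivity : 0 < ρ * σ ^ 2)]
    calc ρ * σ ^ 2 * (ρ * ‖c (x (k + 2))‖ ^ 2) = (σ * (ρ * ‖c (x (k + 2))‖)) ^ 2 := by ring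
      _ ≤ σ ^ 2 * (β * ρ / 8) * a ^ 2 + σ ^ 2 * (β * ρ / 8) * b ^ 2 + E := by linarith
      _ = ρ * σ ^ 2 * (β / 8 * (a ^ 2 + b ^ 2) + E / (ρ * σ ^ 2)) := by field_simp
  have hdesc := hx.AL_succ_add_le (k + 1)
  simp only [proxALLyapunov, proxALError]
  rw [show E / (ρ * σ ^ 2) = 2 * (1 + t) / (ρ * σ ^ 2) * (‖r (k + 2)‖ ^ 2 + t * ‖r (k + 1)‖ ^ 2)
    by ring] at hc
  linarith

theorem penalty_le_lyapunov_add_one (hx : IsProxALIterates f c ρ β x lam r) {ρ₀ Λ : ℝ}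
    (hρ₀ : ρ₀ < ρ) (hσ : 0 < σ) (hΛ : Λ ^ 2 / (2 * σ ^ 2) + ρ₀ ≤ ρ) (hβ : 0 ≤ β) {k : ℕ}
    (hlam : σ * ‖lam (k + 1)‖ ≤ Λ) :
    f (x (k + 2)) + ρ₀ / 2 * ‖c (x (k + 2))‖ ^ 2 ≤ proxALLyapunov f c ρ β x lam k + 1 := by
  have := penalty_le_AL_add_one (f := f) (c := c) hρ₀ hσ hΛ (x (k + 2)) hlam
  have := hx.decrease (k + 1)
  simp only [proxALLyapunov]
  nlinarith [sq_nonneg ‖x (k + 2) - x (k + 1)‖, sq_nonneg ‖x (k + 1) - x k‖]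

theorem initial_bounds (hx : IsProxALIterates f c ρ β x lam r)
    {ρ₀ L U C₀ α : ℝ} (hρ : 1 ≤ ρ) (hρ₀ : 3 * ρ₀ ≤ ρ) (hβ : 0 ≤ β)
    (hL : ∀ y, L ≤ f y + ρ₀ / 2 * ‖c y‖ ^ 2) (hU : f (x 0) ≤ U) (hc0 : ‖c (x 0)‖ ^ 2 ≤ C₀ / ρ)
    (hα : α = 7 * U + 7 * C₀ - 6 * L + 13 * ‖lam 0‖ ^ 2 + 2)
    (hS : S = {y | f y + ρ₀ / 2 * ‖c y‖ ^ 2 ≤ α}) :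
    x 0 ∈ S ∧ x 1 ∈ S ∧ proxALLyapunov f c ρ β x lam 0 + 2 ≤ α := by
  have hρc0 : ρ * ‖c (x 0)‖ ^ 2 ≤ C₀ := by rwa [le_div_iff₀' (by linarith)] at hc0
  have hC₀ : 0 ≤ C₀ := (mul_nonneg (by linarith) (sq_nonneg _)).trans hρc0
  have h0 : f (x 0) + ρ₀ / 2 * ‖c (x 0)‖ ^ 2 ≤ U + C₀ / 6 := by
    nlinarith [mul_le_mul_of_nonneg_right hρ₀ (sq_nonneg ‖c (x 0)‖)]
  have hLU := (hL (x 0)).trans h0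
  have hV0 := AL_le_of_norm_sq_le (f := f) hρ (x 0) (lam 0) hc0
  have hdec0 := hx.decrease 0
  have hΔ0 : 0 ≤ β * ‖x 1 - x 0‖ ^ 2 := by positivity
  have hlam0 : ‖lam 0‖ ^ 2 / (2 * (ρ - ρ₀)) ≤ 3 / 4 * ‖lam 0‖ ^ 2 := by
    rw [div_le_iff₀ (by linarith)]
    nlinarith [sq_nonneg ‖lam 0‖]
  have hlam0' : ‖lam 0‖ ^ 2 / (2 * (ρ - 2 * ρ / 3)) ≤ 3 / 2 * ‖lam 0‖ ^ 2 := by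
    rw [div_le_iff₀ (by linarith)]
    nlinarith [sq_nonneg ‖lam 0‖]
  have h1 := penalty_le_AL_add (f := f) (c := c) (by linarith : ρ₀ < ρ) (x 1) (lam 0)
  -- With the weight `2ρ/3 ≥ ρ₀ + ρ/6` the penalty bound keeps `ρ/6 ‖c (x 1)‖²`, which pays for
  -- the jump `ρ ‖c (x 1)‖²` of the first multiplier step.
  have h1' := penalty_le_AL_add (f := f) (c := c) (by linarith : 2 * ρ / 3 < ρ) (x 1) (lam 0)
  have hc1 : ρ * ‖c (x 1)‖ ^ 2 ≤ 6 * (AL f c ρ (x 0) (lam 0) - L) + 9 * ‖lam 0‖ ^ 2 := by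
    nlinarith [hL (x 1), mul_le_mul_of_nonneg_right hρ₀ (sq_nonneg ‖c (x 1)‖)]
  have hW0 := hx.AL_succ_add_le 0
  simp only [zero_add] at hdec0 hW0
  have := sq_nonneg ‖lam 0‖
  simp only [hS, Set.mem_ofPred_eq, proxALLyapunov]
  refine ⟨by linarith, by linarith, by linarith⟩

theorem forall_mem_and_tendsto_sub (hx : IsProxALIterates f c ρ β x lam r)
    (hreg : RegularOn f c S Mf Lf Mc σ Lc) {ρ₀ α L R : ℝ}
    (hS : S = {y | f y + ρ₀ / 2 * ‖c y‖ ^ 2 ≤ α}) (hSb : Bornology.IsBounded S)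
    (hρ : 0 < ρ) (hβ : 0 < β) (hσ : 0 < σ)
    (hA : 4 / σ ^ 2 * (Lf + Lc * Mf / σ + β) ^ 2 ≤ β * ρ / 8)
    (hB : 4 / σ ^ 2 * (β + 2 * Mc * β / σ) ^ 2 ≤ β * ρ / 8)
    (hΛ : (Mf + β * Metric.diam S + 1) ^ 2 / (2 * σ ^ 2) + ρ₀ ≤ ρ)
    (hρR : 16 * (Mc ^ 2 + σ ^ 2) * R / σ ^ 4 ≤ ρ)
    (hr : ∀ k, ‖r (k + 1)‖ ≤ 1) (hR : ∀ N, ∑ k ∈ range N, ‖r (k + 1)‖ ^ 2 ≤ R)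
    (hL : ∀ y, L ≤ f y + ρ₀ / 2 * ‖c y‖ ^ 2)
    (h0 : x 0 ∈ S) (h1 : x 1 ∈ S) (hW0 : proxALLyapunov f c ρ β x lam 0 + 2 ≤ α) :
    (∀ k, x k ∈ S) ∧ Tendsto (fun k => x (k + 1) - x k) atTop (𝓝 0) := by
  have hMf := (norm_nonneg _).trans (hreg.norm_gradient_le _ h0)
  have hMc := (norm_nonneg _).trans (hreg.norm_fderiv_le _ h0)
  have hρ₀ : ρ₀ < ρ := by
    have : 0 < (Mf + β * Metric.diam S + 1) ^ 2 / (2 * σ ^ 2) := by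
      have := Metric.diam_nonneg (s := S)
      positivity
    linarith
  have hlam : ∀ k, x k ∈ S → x (k + 1) ∈ S → σ * ‖lam (k + 1)‖ ≤ Mf + β * Metric.diam S + 1 :=
    fun k hk hk1 => hx.mul_norm_lam_succ_le_of_mem hreg hSb hβ.le (hr k) hk hk1
  have hstep := fun k => hx.lyapunov_succ_add_le hreg hρ hβ.le hσ hA hB le_rfl (k := k)
  have hsum := sum_range_proxALError_le_one hR hρ hσ (by positivity) le_rfl hρR
  have hxS : ∀ k, x k ∈ S := forall_of_le_add (W := proxALLyapunov f c ρ β x lam)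
    (B := proxALLyapunov f c ρ β x lam 0 + 1) h0 h1
    (fun k h1 h2 => (le_add_of_nonneg_right (by positivity)).trans (hstep k h1 h2))
    (fun N => by linarith [hsum N])
    (fun k hk hk1 hW => by
      rw [hS, Set.mem_ofPred_eq]
      linarith [hx.penalty_le_lyapunov_add_one hρ₀ hσ hΛ hβ.le (hlam k hk hk1)])
  exact ⟨hxS, tendsto_sub_of_le_add (by positivity : 0 < β / 4) (fun k => hstep k (hxS _) (hxS _))
    (fun k => sub_one_le_proxALLyapunov hρ₀ hσ hΛ hβ.le hL (hlam k (hxS k) (hxS _))) hsum⟩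

theorem tendsto_stationarity (hx : IsProxALIterates f c ρ β x lam r)
    (hΔ : Tendsto (fun k => x (k + 1) - x k) atTop (𝓝 0))
    (hr : Tendsto (fun k => r (k + 1)) atTop (𝓝 0)) :
    Tendsto (fun k => gradient f (x (k + 1)) + gradc c (x (k + 1)) (lam (k + 1))) atTop (𝓝 0) := by
  have h : ∀ k, gradient f (x (k + 1)) + gradc c (x (k + 1)) (lam (k + 1))
      = r (k + 1) - β • (x (k + 1) - x k) := fun k => by
    rw [hx.gradc_lam_succ k]; abel
  simpa only [h, smul_zero, sub_zero] using hr.sub (hΔ.const_smul β)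

theorem tendsto_c_succ (hx : IsProxALIterates f c ρ β x lam r)
    (hreg : RegularOn f c S Mf Lf Mc σ Lc)
    (hρ : 0 < ρ) (hβ : 0 ≤ β) (hσ : 0 < σ) (hxS : ∀ k, x k ∈ S)
    (hΔ : Tendsto (fun k => x (k + 1) - x k) atTop (𝓝 0))
    (hr : Tendsto (fun k => r (k + 1)) atTop (𝓝 0)) :
    Tendsto (fun k => c (x (k + 1))) atTop (𝓝 0) := by
  have hΔn : Tendsto (fun k => ‖x (k + 1) - x k‖) atTop (𝓝 0) := by simpa using hΔ.norm
  have hrn : Tendsto (fun k => ‖r (k + 1)‖) atTop (𝓝 0) := by simpa using hr.norm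
  have hbound := ((((hΔn.comp (tendsto_add_atTop_nat 1)).const_mul (Lf + Lc * Mf / σ + β)).add
    (hΔn.const_mul (β + 2 * Mc * β / σ))).add (hrn.comp (tendsto_add_atTop_nat 1))).add
    (hrn.const_mul (1 + 2 * Mc / σ)) |>.div_const (σ * ρ)
  simp only [mul_zero, add_zero, zero_div] at hbound
  refine (tendsto_add_atTop_iff_nat 1).mp (squeeze_zero_norm (fun k => ?_) hbound)
  rw [le_div_iff₀ (by positivity)]
  have := hx.mul_norm_lam_sub_le hreg hβ hσ (hxS (k + 1)) (hxS (k + 2))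
  rw [hx.norm_lam_succ_sub hρ.le (k + 1)] at this
  simp only [Function.comp_apply]
  linarith

end IsProxALIterates

theorem exists_subseq_tendsto_kkt (hf : ContDiff ℝ 1 f) (hc : ContDiff ℝ 1 c)
    (hS : IsCompact S) (hxS : ∀ k, x (k + 1) ∈ S) {Λ : ℝ} (hlam : ∀ k, ‖lam (k + 1)‖ ≤ Λ)
    (hstat : Tendsto (fun k => gradient f (x (k + 1)) + gradc c (x (k + 1)) (lam (k + 1)))
      atTop (𝓝 0))
    (hfeas : Tendsto (fun k => c (x (k + 1))) atTop (𝓝 0)) :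
    ∃ (xstar : EuclideanSpace ℝ (Fin n)) (lamstar : EuclideanSpace ℝ (Fin m)) (φ : ℕ → ℕ),
      StrictMono φ ∧ (∀ k, 1 ≤ φ k) ∧
      Tendsto (fun k => (x (φ k), lam (φ k))) atTop (𝓝 (xstar, lamstar)) ∧
      gradient f xstar + gradc c xstar lamstar = 0 ∧ c xstar = 0 := by
  obtain ⟨⟨xstar, lamstar⟩, -, ψ, hψ, hlim⟩ := (hS.prod (isCompact_closedBall 0 Λ)).tendsto_subseq
    (x := fun k => (x (k + 1), lam (k + 1)))
    fun k => ⟨hxS k, mem_closedBall_zero_iff.mpr (hlam k)⟩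
  refine ⟨xstar, lamstar, fun k => ψ k + 1, fun a b h => Nat.succ_lt_succ (hψ h),
    fun k => Nat.le_add_left 1 (ψ k), hlim, ?_, ?_⟩
  · exact tendsto_nhds_unique
      ((((hf.continuous_gradient.comp continuous_fst).add hc.continuous_gradc_apply).tendsto _).comp
        hlim) (hstat.comp hψ.tendsto_atTop)
  · exact tendsto_nhds_unique (((hc.continuous.comp continuous_fst).tendsto _).comp hlim)
      (hfeas.comp hψ.tendsto_atTop)

end ProxAL

theorem stmt6_general
    {n m : ℕ}
    (f : EuclideanSpace ℝ (Fin n) → ℝ) (c : EuclideanSpace ℝ (Fin n) → EuclideanSpace ℝ (Fin m))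
    (hf : ContDiff ℝ 2 f) (hc : ContDiff ℝ 2 c)
    (ρ β : ℝ) (hρ : 0 < ρ) (hβ : 0 < β)
    (x : ℕ → EuclideanSpace ℝ (Fin n)) (lam : ℕ → EuclideanSpace ℝ (Fin m)) (r : ℕ → EuclideanSpace ℝ (Fin n))
    (hstat : ∀ k : ℕ,
      gradient f (x (k+1)) + gradc c (x (k+1)) (lam k)
        + ρ • gradc c (x (k+1)) (c (x (k+1))) + β • (x (k+1) - x k) = r (k+1))
    (hdecr : ∀ k : ℕ,
      AL f c ρ (x (k+1)) (lam k) + β / 2 * ‖x (k+1) - x k‖ ^ 2 ≤ AL f c ρ (x k) (lam k))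
    (hmul : ∀ k : ℕ, lam (k+1) = lam k + ρ • c (x (k+1)))
    (ρ₀ Lbar U C₀ αhat : ℝ)
    (hcompact : ∀ α : ℝ,
      {y : EuclideanSpace ℝ (Fin n) | f y + ρ₀ / 2 * ‖c y‖ ^ 2 ≤ α} = ∅ ∨
        IsCompact {y : EuclideanSpace ℝ (Fin n) | f y + ρ₀ / 2 * ‖c y‖ ^ 2 ≤ α})
    (hLbar : Lbar = ⨅ y : EuclideanSpace ℝ (Fin n), (f y + ρ₀ / 2 * ‖c y‖ ^ 2))
    (hU : ∀ y : EuclideanSpace ℝ (Fin n), ‖c y‖ ≤ 1 → f y ≤ U)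
    (hαhat : αhat = 7 * U + 7 * C₀ - 6 * Lbar + 13 * ‖lam 0‖ ^ 2 + 2)
    (S : Set (EuclideanSpace ℝ (Fin n)))
    (hS : S = {y : EuclideanSpace ℝ (Fin n) | f y + ρ₀ / 2 * ‖c y‖ ^ 2 ≤ αhat})
    (Mf Lf Mc σ Lc DS : ℝ) (hσ : 0 < σ)
    (hMf : ∀ y ∈ S, ‖gradient f y‖ ≤ Mf)
    (hLf : ∀ y ∈ S, ∀ z ∈ S, ‖gradient f y - gradient f z‖ ≤ Lf * ‖y - z‖)
    (hMc : ∀ y ∈ S, ‖fderiv ℝ c y‖ ≤ Mc)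
    (hσlb : ∀ y ∈ S, ∀ v : EuclideanSpace ℝ (Fin m), σ * ‖v‖ ≤ ‖gradc c y v‖)
    (hLc : ∀ y ∈ S, ∀ z ∈ S, ‖fderiv ℝ c y - fderiv ℝ c z‖ ≤ Lc * ‖y - z‖)
    (hDS : DS = Metric.diam S)
    (C1 C2 : ℝ)
    (hC1 : C1 = 4 / σ ^ 2 * (Lf + Lc * Mf / σ + β) ^ 2)
    (hC2 : C2 = 4 / σ ^ 2 * (β + 2 * Mc * β / σ) ^ 2)
    (ε η : ℝ) (hε : 0 < ε ∧ ε ≤ 1)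
    (R : ℝ)
    (hRsum : ∀ K : ℕ, ∑ k ∈ Finset.range K, ‖r (k+1)‖ ^ 2 ≤ R)
    (hrb : ∀ k : ℕ, 1 ≤ k → ‖r k‖ ≤ ε / 2)
    (hβdef : β = ε ^ η / 2)
    (hρbig : max (max (16 * max C1 C2 / ε ^ η)
        ((Mf + β * DS + 1) ^ 2 / (2 * σ ^ 2) + ρ₀))
        (max (max (16 * (Mc ^ 2 + σ ^ 2) * R / σ ^ 4) (3 * ρ₀)) 1) ≤ ρ)
    (hx0 : ‖c (x 0)‖ ^ 2 ≤ min (C₀ / ρ) 1)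
 :
    ∃ (xstar : EuclideanSpace ℝ (Fin n)) (lamstar : EuclideanSpace ℝ (Fin m)) (φ : ℕ → ℕ),
      StrictMono φ ∧ (∀ k, 1 ≤ φ k) ∧
      Tendsto (fun k => (x (φ k), lam (φ k))) atTop (𝓝 (xstar, lamstar)) ∧
      gradient f xstar + gradc c xstar lamstar = 0 ∧ c xstar = 0 := by
  obtain ⟨-, hε1⟩ := hε
  subst hDS
  have hx : IsProxALIterates f c ρ β x lam r := ⟨hstat, hdecr, hmul⟩
  have hreg : RegularOn f c S Mf Lf Mc σ Lc := ⟨hMf, hLf, hMc, hσlb, hLc⟩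
  simp only [max_le_iff] at hρbig
  rw [le_min_iff] at hx0
  obtain ⟨⟨hρC, hρΛ⟩, ⟨hρR, hρ₀⟩, hρ1⟩ := hρbig
  rw [show ε ^ η = 2 * β by linarith, div_le_iff₀ (by positivity)] at hρC
  have hA : C1 ≤ β * ρ / 8 := by linarith [le_max_left C1 C2]
  have hB : C2 ≤ β * ρ / 8 := by linarith [le_max_right C1 C2]
  have hL : ∀ y, Lbar ≤ f y + ρ₀ / 2 * ‖c y‖ ^ 2 :=
    fun y => hLbar ▸ ciInf_le (bddBelow_range_of_isCompact_sublevel (by fun_prop) hcompact) y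
  obtain ⟨hx0S, hx1S, hW0⟩ := hx.initial_bounds hρ1 hρ₀ hβ.le hL
    (hU _ ((sq_le_one_iff₀ (norm_nonneg _)).mp hx0.2)) hx0.1 hαhat hS
  have hSc : IsCompact S :=
    hS ▸ (hcompact αhat).resolve_left (Set.nonempty_iff_ne_empty.mp (hS ▸ ⟨x 0, hx0S⟩))
  have hr_le : ∀ k, ‖r (k + 1)‖ ≤ 1 := fun k => (hrb _ k.succ_pos).trans (by linarith)
  obtain ⟨hxS, hΔ⟩ := hx.forall_mem_and_tendsto_sub hreg hS hSc.isBounded hρ hβ hσ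
    (hC1 ▸ hA) (hC2 ▸ hB) hρΛ hρR hr_le hRsum hL hx0S hx1S hW0
  have hr_lim := tendsto_zero_of_sum_norm_sq_le hRsum
  exact exists_subseq_tendsto_kkt (hf.of_le one_le_two) (hc.of_le one_le_two) hSc (fun k => hxS _)
    (fun k => (le_div_iff₀' hσ).mpr
      (hx.mul_norm_lam_succ_le_of_mem hreg hSc.isBounded hβ.le (hr_le k) (hxS k) (hxS _)))
    (hx.tendsto_stationarity hΔ hr_lim) (hx.tendsto_c_succ hreg hρ hβ.le hσ hxS hΔ hr_lim)

theorem stmt6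
    {n m : ℕ}
    (f : EuclideanSpace ℝ (Fin n) → ℝ) (c : EuclideanSpace ℝ (Fin n) → EuclideanSpace ℝ (Fin m))
    (hf : ContDiff ℝ 2 f) (hc : ContDiff ℝ 2 c)
    (ρ β : ℝ) (hρ : 0 < ρ) (hβ : 0 < β)
    (x : ℕ → EuclideanSpace ℝ (Fin n)) (lam : ℕ → EuclideanSpace ℝ (Fin m)) (r : ℕ → EuclideanSpace ℝ (Fin n))
    (hstat : ∀ k : ℕ,
      gradient f (x (k+1)) + gradc c (x (k+1)) (lam k)
        + ρ • gradc c (x (k+1)) (c (x (k+1))) + β • (x (k+1) - x k) = r (k+1))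
    (hdecr : ∀ k : ℕ,
      AL f c ρ (x (k+1)) (lam k) + β / 2 * ‖x (k+1) - x k‖ ^ 2 ≤ AL f c ρ (x k) (lam k))
    (hmul : ∀ k : ℕ, lam (k+1) = lam k + ρ • c (x (k+1)))
    (ρ₀ Lbar U C₀ αhat : ℝ) (hρ₀ : 0 ≤ ρ₀)
    (hcompact : ∀ α : ℝ,
      {y : EuclideanSpace ℝ (Fin n) | f y + ρ₀ / 2 * ‖c y‖ ^ 2 ≤ α} = ∅ ∨
        IsCompact {y : EuclideanSpace ℝ (Fin n) | f y + ρ₀ / 2 * ‖c y‖ ^ 2 ≤ α})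
    (hLbar : Lbar = ⨅ y : EuclideanSpace ℝ (Fin n), (f y + ρ₀ / 2 * ‖c y‖ ^ 2))
    (hU : ∀ y : EuclideanSpace ℝ (Fin n), ‖c y‖ ≤ 1 → f y ≤ U)
    (hC₀ : 0 < C₀)
    (hαhat : αhat = 7 * U + 7 * C₀ - 6 * Lbar + 13 * ‖lam 0‖ ^ 2 + 2)
    (S : Set (EuclideanSpace ℝ (Fin n)))
    (hS : S = {y : EuclideanSpace ℝ (Fin n) | f y + ρ₀ / 2 * ‖c y‖ ^ 2 ≤ αhat})
    (Mf Lf Mc σ Lc DS : ℝ) (hσ : 0 < σ)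
    (hMf : ∀ y ∈ S, ‖gradient f y‖ ≤ Mf)
    (hLf : ∀ y ∈ S, ∀ z ∈ S, ‖gradient f y - gradient f z‖ ≤ Lf * ‖y - z‖)
    (hMc : ∀ y ∈ S, ‖fderiv ℝ c y‖ ≤ Mc)
    (hσlb : ∀ y ∈ S, ∀ v : EuclideanSpace ℝ (Fin m), σ * ‖v‖ ≤ ‖gradc c y v‖)
    (hLc : ∀ y ∈ S, ∀ z ∈ S, ‖fderiv ℝ c y - fderiv ℝ c z‖ ≤ Lc * ‖y - z‖)
    (hDS : DS = Metric.diam S)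
    (C1 C2 : ℝ)
    (hC1 : C1 = 4 / σ ^ 2 * (Lf + Lc * Mf / σ + β) ^ 2)
    (hC2 : C2 = 4 / σ ^ 2 * (β + 2 * Mc * β / σ) ^ 2)
    (ε η : ℝ) (hε : 0 < ε ∧ ε ≤ 1) (hη : 0 ≤ η ∧ η ≤ 2)
    (R : ℝ) (hR : 1 ≤ R)
    (hRsum : ∀ K : ℕ, ∑ k ∈ Finset.range K, ‖r (k+1)‖ ^ 2 ≤ R)
    (hrb : ∀ k : ℕ, 1 ≤ k → ‖r k‖ ≤ ε / 2)
    (hβdef : β = ε ^ η / 2)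
    (hρbig : max (max (16 * max C1 C2 / ε ^ η)
        ((Mf + β * DS + 1) ^ 2 / (2 * σ ^ 2) + ρ₀))
        (max (max (16 * (Mc ^ 2 + σ ^ 2) * R / σ ^ 4) (3 * ρ₀)) 1) ≤ ρ)
    (hx0 : ‖c (x 0)‖ ^ 2 ≤ min (C₀ / ρ) 1)
 :
    ∃ (xstar : EuclideanSpace ℝ (Fin n)) (lamstar : EuclideanSpace ℝ (Fin m)) (φ : ℕ → ℕ),
      StrictMono φ ∧ (∀ k, 1 ≤ φ k) ∧
      Tendsto (fun k => (x (φ k), lam (φ k))) atTop (𝓝 (xstar, lamstar)) ∧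
      gradient f xstar + gradc c xstar lamstar = 0 ∧ c xstar = 0 :=
  stmt6_general f c hf hc ρ β hρ hβ x lam r hstat hdecr hmul ρ₀ Lbar U C₀ αhat hcompact hLbar hU
    hαhat S hS Mf Lf Mc σ Lc DS hσ hMf hLf hMc hσlb hLc hDS C1 C2 hC1 hC2 ε η hε R hRsum hrb hβdef
    hρbig hx0
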